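/- Let L be a positive integer and define D_L(z) = (2L+1)^{−1} ∑_{n=0}^{L} C(2L+1, 2n) z^{n−L} for z ∈ ℂ \ {0}. Then for every θ ∈ ℝ, D_L(e^{2iθ}) · D_L(e^{−2iθ}) = (2^{2L}/(2L+1)²) ∑_{n=0}^{L} C(2L+1, 2n) cos^{2n}(θ). In particular |D_L(e^{2iθ})|² equals this quantity. -/

import Mathlib

/-!
Write `w = e^{iθ}`. Keeping only the even part of the binomial expansion,
`D_L(w²) = ((1 + w)^{2L+1} + (1 - w)^{2L+1}) / (2 (2L+1) w^{2L})`.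
Multiplying the numerators at `w` and `w⁻¹`, the products `(1 ± w)(1 ± w⁻¹) = 2 ± 2 cos θ`
survive while the mixed products are `±(w - w⁻¹)`, whose odd powers cancel; what remains,
`(2 + 2 cos θ)^{2L+1} + (2 - 2 cos θ)^{2L+1}`, is again an even binomial part, now in `cos θ`.
The modulus follows since `D_L` has real coefficients and `conj (e^{2iθ}) = e^{-2iθ}`.
-/

open Complex

/-- The Thiran common factor `D_L` (closed binomial form). -/
noncomputable def DL (L : ℕ) (z : ℂ) : ℂ :=
  (1 / (2 * (L : ℂ) + 1)) *
    ∑ n ∈ Finset.range (L + 1), (Nat.choose (2 * L + 1) (2 * n) : ℂ) * z ^ ((n : ℤ) - (L : ℤ))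

open ComplexConjugate Finset

theorem Finset.sum_range_two_mul {M : Type*} [AddCommMonoid M] (m : ℕ) (f : ℕ → M) :
    ∑ k ∈ range (2 * m), f k = ∑ n ∈ range m, (f (2 * n) + f (2 * n + 1)) := by
  induction m with
  | zero => simp
  | succ m ih => rw [Nat.mul_succ, sum_range_succ, sum_range_succ, ih, sum_range_succ, add_assoc]

section CommRing

variable {R : Type*} [CommRing R]

theorem one_add_pow_add_one_sub_pow (x : R) (m : ℕ) :
    (1 + x) ^ (2 * m + 1) + (1 - x) ^ (2 * m + 1) =
      2 * ∑ n ∈ range (m + 1), ((2 * m + 1).choose (2 * n) : R) * x ^ (2 * n) := by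
  rw [add_comm 1 x, sub_eq_neg_add, add_pow, add_pow, ← sum_add_distrib,
    show 2 * m + 1 + 1 = 2 * (m + 1) by ring, sum_range_two_mul, mul_sum]
  refine sum_congr rfl fun n _ => ?_
  -- the odd-degree terms of the two expansions cancel
  rw [(even_two_mul n).neg_pow, pow_succ, pow_succ, (even_two_mul n).neg_pow]
  ring

theorem one_add_pow_add_one_sub_pow_mul_of_mul_eq_one {x y : R} (hxy : x * y = 1) {m : ℕ} (hm : Odd m) :
    ((1 + x) ^ m + (1 - x) ^ m) * ((1 + y) ^ m + (1 - y) ^ m) =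
      (2 + (x + y)) ^ m + (2 - (x + y)) ^ m := by
  have hpp : (1 + x) * (1 + y) = 2 + (x + y) := by linear_combination hxy
  have hmm : (1 - x) * (1 - y) = 2 - (x + y) := by linear_combination hxy
  have hmp : (1 - x) * (1 + y) = -((1 + x) * (1 - y)) := by linear_combination -2 * hxy
  calc _ = ((1 + x) * (1 + y)) ^ m + ((1 - x) * (1 - y)) ^ m
        + (((1 + x) * (1 - y)) ^ m + ((1 - x) * (1 + y)) ^ m) := by simp only [mul_pow]; ring
    _ = _ := by rw [hpp, hmm, hmp, hm.neg_pow, add_neg_cancel, add_zero]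

end CommRing

theorem DL_sq {w : ℂ} (hw : w ≠ 0) (L : ℕ) :
    DL L (w ^ 2) = ((1 + w) ^ (2 * L + 1) + (1 - w) ^ (2 * L + 1)) /
      (2 * (2 * L + 1) * w ^ (2 * L)) := by
  have hterm (n : ℕ) : (w ^ 2) ^ ((n : ℤ) - L) = w ^ (2 * n) / w ^ (2 * L) := by
    rw [← zpow_natCast, ← zpow_mul, mul_sub, zpow_sub₀ hw]; norm_cast
  have hL : (2 * L + 1 : ℂ) ≠ 0 := by exact_mod_cast (2 * L).succ_ne_zero
  simp only [DL, hterm, one_add_pow_add_one_sub_pow, ← mul_div_assoc, ← sum_div]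
  field_simp

theorem DL_sq_mul_DL_inv_sq {w : ℂ} (hw : w ≠ 0) (L : ℕ) :
    DL L (w ^ 2) * DL L (w⁻¹ ^ 2) = (2 ^ (2 * L) / (2 * L + 1) ^ 2) *
      ∑ n ∈ range (L + 1), ((2 * L + 1).choose (2 * n) : ℂ) * ((w + w⁻¹) / 2) ^ (2 * n) := by
  set c := (w + w⁻¹) / 2
  have hL : (2 * L + 1 : ℂ) ≠ 0 := by exact_mod_cast (2 * L).succ_ne_zero
  rw [DL_sq hw, DL_sq (inv_ne_zero hw), div_mul_div_comm,
    one_add_pow_add_one_sub_pow_mul_of_mul_eq_one (mul_inv_cancel₀ hw) (odd_two_mul_add_one L),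
    show w + w⁻¹ = 2 * c by ring, ← mul_one_add, ← mul_one_sub, mul_pow, mul_pow, ← mul_add,
    one_add_pow_add_one_sub_pow, inv_pow]
  field_simp
  ring

theorem DL_conj (L : ℕ) (z : ℂ) : DL L (conj z) = conj (DL L z) := by
  simp only [DL, map_mul, map_div₀, map_one, map_add, map_ofNat, map_natCast, map_sum, map_zpow₀]

theorem DL_squared_modulus_general (L : ℕ) (θ : ℝ) :
    DL L (Complex.exp (2 * Complex.I * (θ : ℂ))) *
        DL L (Complex.exp (-(2 * Complex.I * (θ : ℂ)))) =
      ((2 : ℂ) ^ (2 * L) / (2 * (L : ℂ) + 1) ^ 2) *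
        ∑ n ∈ Finset.range (L + 1),
          (Nat.choose (2 * L + 1) (2 * n) : ℂ) * (Real.cos θ : ℂ) ^ (2 * n) ∧
    (‖(DL L (Complex.exp (2 * Complex.I * (θ : ℂ))))‖) ^ 2 =
      ((2 : ℝ) ^ (2 * L) / (2 * (L : ℝ) + 1) ^ 2) *
        ∑ n ∈ Finset.range (L + 1),
          (Nat.choose (2 * L + 1) (2 * n) : ℝ) * Real.cos θ ^ (2 * n) := by
  have hz : exp (2 * I * θ) = exp (θ * I) ^ 2 := by rw [← exp_nat_mul]; ring_nf
  have hz' : exp (-(2 * I * θ)) = (exp (θ * I))⁻¹ ^ 2 := by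
    rw [← exp_neg, ← exp_nat_mul]; ring_nf
  have hcos : (Real.cos θ : ℂ) = (exp (θ * I) + (exp (θ * I))⁻¹) / 2 := by
    rw [ofReal_cos, cos, ← exp_neg]; ring_nf
  have hconj : exp (-(2 * I * θ)) = conj (exp (2 * I * θ)) := by
    rw [← exp_conj, map_mul, map_mul, conj_ofReal, conj_I, map_ofNat]; ring_nf
  have hprod := DL_sq_mul_DL_inv_sq (exp_ne_zero (θ * I)) L
  rw [← hz, ← hz', ← hcos] at hprod
  refine ⟨hprod, ofReal_injective ?_⟩
  rw [hconj, DL_conj, mul_conj, normSq_eq_norm_sq] at hprod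
  push_cast at hprod ⊢
  exact hprod

/-- `D_L(e^{2iθ}) D_L(e^{-2iθ})` as a cosine polynomial, and the
corresponding expression for `|D_L(e^{2iθ})|²`. -/
theorem DL_squared_modulus (L : ℕ) (hL : 0 < L) (θ : ℝ) :
    DL L (Complex.exp (2 * Complex.I * (θ : ℂ))) *
        DL L (Complex.exp (-(2 * Complex.I * (θ : ℂ)))) =
      ((2 : ℂ) ^ (2 * L) / (2 * (L : ℂ) + 1) ^ 2) *
        ∑ n ∈ Finset.range (L + 1),
          (Nat.choose (2 * L + 1) (2 * n) : ℂ) * (Real.cos θ : ℂ) ^ (2 * n) ∧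
    (‖(DL L (Complex.exp (2 * Complex.I * (θ : ℂ))))‖) ^ 2 =
      ((2 : ℝ) ^ (2 * L) / (2 * (L : ℝ) + 1) ^ 2) *
        ∑ n ∈ Finset.range (L + 1),
          (Nat.choose (2 * L + 1) (2 * n) : ℝ) * Real.cos θ ^ (2 * n) :=
  DL_squared_modulus_general L θ
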